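/- Let f ∈ Hom_{A^e}(P_1, A) be the cocycle with f(e_1) = x and f(e_i) = 0 for i ≠ 1, and let ψ_f be the family of (A⊗A)-linear maps ψ_i : P_i → P_i with ψ_i(e_i) = i·e_i. Then for every i ≥ 1, (d_i∘ψ_i − ψ_{i−1}∘d_i)(e_i) = ((f⊗1 − 1⊗f)∘Δ_P)(e_i) = x·e_{i−1} + (−1)^i e_{i−1}·x, i.e. both sides equal the element x⊗1 + (−1)^i (1⊗x) of P_{i−1} = A⊗A. Hence ψ_f satisfies the homotopy lifting equation d∘ψ_f − ψ_f∘d = (f⊗1 − 1⊗f)Δ_P for the degree 1 cocycle f. -/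

import Mathlib

open scoped TensorProduct DirectSum
open MulOpposite

set_option synthInstance.maxHeartbeats 1000000
set_option maxHeartbeats 1000000

noncomputable section

universe u

namespace HLPaper

variable {k : Type u} [Field k]

def pcast {P : ℤ → Type u} [∀ i, AddCommGroup (P i)] [∀ i, Module k (P i)]
    {i j : ℤ} (h : i = j) : P i →ₗ[k] P j := by subst h; exact LinearMap.id

structure Bimod (A : Type u) [Ring A] [Algebra k A]
    (P : ℤ → Type u) [∀ i, AddCommGroup (P i)] [∀ i, Module k (P i)] : Type u where
  actL : ∀ i, A →ₐ[k] Module.End k (P i)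
  actR : ∀ i, Aᵐᵒᵖ →ₐ[k] Module.End k (P i)

variable {A : Type u} [Ring A] [Algebra k A]
variable {P : ℤ → Type u} [∀ i, AddCommGroup (P i)] [∀ i, Module k (P i)]

def Bimod.IsCommuting (act : Bimod (k := k) A P) : Prop :=
  ∀ (i : ℤ) (a : A) (b : Aᵐᵒᵖ), act.actL i a * act.actR i b = act.actR i b * act.actL i a

def IsBimap (act : Bimod (k := k) A P) {i j : ℤ} (φ : P i →ₗ[k] P j) : Prop :=
  (∀ a : A, φ ∘ₗ act.actL i a = act.actL j a ∘ₗ φ) ∧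
  (∀ b : Aᵐᵒᵖ, φ ∘ₗ act.actR i b = act.actR j b ∘ₗ φ)

def IsBimapToAlg (act : Bimod (k := k) A P) {m : ℤ} (f : P m →ₗ[k] A) : Prop :=
  (∀ (a : A) (x : P m), f (act.actL m a x) = a * f x) ∧
  (∀ (a : A) (x : P m), f (act.actR m (op a) x) = f x * a)

def envModule (act : Bimod (k := k) A P) (h : act.IsCommuting) (i : ℤ) :
    Module (A ⊗[k] Aᵐᵒᵖ) (P i) :=
  Module.compHom _ (Algebra.TensorProduct.lift (act.actL i) (act.actR i)
    (fun a b => h i a b)).toRingHom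

/-! ### Quotient helpers (total versions of `liftQ`/`mapQ`) -/

/-- `Submodule.liftQ`, extended by zero if the compatibility condition fails.
(In all uses below the condition does hold.) -/
def liftQOr0 {X Z : Type u} [AddCommGroup X] [Module k X] [AddCommGroup Z] [Module k Z]
    (S : Submodule k X) (f : X →ₗ[k] Z) : (X ⧸ S) →ₗ[k] Z :=
  letI := Classical.dec (S ≤ LinearMap.ker f)
  if h : S ≤ LinearMap.ker f then S.liftQ f h else 0

/-- `Submodule.mapQ`, extended by zero if the compatibility condition fails. -/
def mapQOr0 {X Y : Type u} [AddCommGroup X] [Module k X] [AddCommGroup Y] [Module k Y]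
    (S : Submodule k X) (T : Submodule k Y) (f : X →ₗ[k] Y) : (X ⧸ S) →ₗ[k] (Y ⧸ T) :=
  letI := Classical.dec (S ≤ T.comap f)
  if h : S ≤ T.comap f then Submodule.mapQ S T f h else 0

/-! ### The balanced tensor product `P ⊗_A P` -/

/-- The balancing subspace defining `P j ⊗_A P l` as a quotient of `P j ⊗ₖ P l`. -/
def bal (act : Bimod (k := k) A P) (j l : ℤ) : Submodule k (P j ⊗[k] P l) :=
  Submodule.span k
    {z | ∃ (a : A) (x : P j) (y : P l),
      z = (act.actR j (op a) x) ⊗ₜ[k] y - x ⊗ₜ[k] (act.actL l a y)}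

/-- The component `P j ⊗_A P l` of the tensor product of complexes `P ⊗_A P`. -/
abbrev TensA (act : Bimod (k := k) A P) (j l : ℤ) : Type u :=
  (P j ⊗[k] P l) ⧸ bal act j l

instance (act : Bimod (k := k) A P) (j l : ℤ) : AddCommGroup (TensA act j l) :=
  inferInstanceAs (AddCommGroup ((P j ⊗[k] P l) ⧸ bal act j l))

instance (act : Bimod (k := k) A P) (j l : ℤ) : Module k (TensA act j l) :=
  inferInstanceAs (Module k ((P j ⊗[k] P l) ⧸ bal act j l))

/-- The image of an elementary tensor `x ⊗ y` in `P j ⊗_A P l`. -/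
def tmulA (act : Bimod (k := k) A P) {j l : ℤ} (x : P j) (y : P l) : TensA act j l :=
  Submodule.Quotient.mk (x ⊗ₜ[k] y)

/-- Cast for `TensA` along equalities of indices. -/
def tcast (act : Bimod (k := k) A P) {j j' l l' : ℤ} (h1 : j = j') (h2 : l = l') :
    TensA act j l →ₗ[k] TensA act j' l' := by subst h1; subst h2; exact LinearMap.id

/-- The map `P j ⊗_A P l → P j' ⊗_A P l'` induced by a pair of bimodule maps. -/
def mapTensA (act : Bimod (k := k) A P) {j l j' l' : ℤ}
    (φ : P j →ₗ[k] P j') (ψ : P l →ₗ[k] P l') : TensA act j l →ₗ[k] TensA act j' l' :=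
  mapQOr0 _ _ (TensorProduct.map φ ψ)

/-- Left action of `A` on `P j ⊗_A P l` (through the left factor). -/
def actLTensA (act : Bimod (k := k) A P) (j l : ℤ) (a : A) :
    TensA act j l →ₗ[k] TensA act j l :=
  mapTensA act (act.actL j a) LinearMap.id

/-- Right action of `A` on `P j ⊗_A P l` (through the right factor). -/
def actRTensA (act : Bimod (k := k) A P) (j l : ℤ) (b : Aᵐᵒᵖ) :
    TensA act j l →ₗ[k] TensA act j l :=
  mapTensA act LinearMap.id (act.actR l b)

/-! ### The total complex of `P ⊗_A P` in a given degree -/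

/-- Index set of the degree-`i` component of a total complex. -/
abbrev DiagIdx (i : ℤ) : Type := {p : ℤ × ℤ // p.1 + p.2 = i}

/-- The degree-`i` component `(P ⊗_A P)_i = ⨁_{j+l=i} P j ⊗_A P l`. -/
abbrev DTarget (act : Bimod (k := k) A P) (i : ℤ) : Type u :=
  ⨁ (p : DiagIdx i), TensA act p.1.1 p.1.2

instance (act : Bimod (k := k) A P) (i : ℤ) : AddCommGroup (DTarget act i) :=
  inferInstanceAs (AddCommGroup (⨁ (p : DiagIdx i), TensA act p.1.1 p.1.2))

instance (act : Bimod (k := k) A P) (i : ℤ) : Module k (DTarget act i) :=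
  inferInstanceAs (Module k (⨁ (p : DiagIdx i), TensA act p.1.1 p.1.2))

/-- Inclusion of the `(j,l)` component into `(P ⊗_A P)_{j+l}`. -/
def inclDT (act : Bimod (k := k) A P) {i : ℤ} (p : DiagIdx i) :
    TensA act p.1.1 p.1.2 →ₗ[k] DTarget act i :=
  DirectSum.lof k (DiagIdx i) (fun q : DiagIdx i => TensA act q.1.1 q.1.2) p

/-- The Koszul-signed differential on the total complex `P ⊗_A P`:
`d(p ⊗ q) = d(p) ⊗ q + (−1)^{|p|} p ⊗ d(q)`. -/
def dDT (act : Bimod (k := k) A P) (d : ∀ i, P i →ₗ[k] P (i - 1)) (i : ℤ) :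
    DTarget act i →ₗ[k] DTarget act (i - 1) :=
  DirectSum.toModule k (DiagIdx i) (DTarget act (i - 1)) fun p =>
    (inclDT act (⟨(p.1.1 - 1, p.1.2), by have := p.2; omega⟩ : DiagIdx (i - 1))) ∘ₗ
        mapTensA act (d p.1.1) LinearMap.id
      + (p.1.1.negOnePow : ℤ) •
        ((inclDT act (⟨(p.1.1, p.1.2 - 1), by have := p.2; omega⟩ : DiagIdx (i - 1))) ∘ₗ
          mapTensA act LinearMap.id (d p.1.2))

/-! ### Collapse maps `(f ⊗ 1)` and `(1 ⊗ f)` on `P ⊗_A P`, using `A ⊗_A P ≅ P ≅ P ⊗_A A` -/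

/-- `(f ⊗ 1) : P m ⊗_A P l → P l`, `x ⊗ y ↦ f(x) · y`, for `f : P m → A`. -/
def collapseL (act : Bimod (k := k) A P) {m : ℤ} (f : P m →ₗ[k] A) (l : ℤ) :
    TensA act m l →ₗ[k] P l :=
  liftQOr0 _ (TensorProduct.lift ((act.actL l).toLinearMap ∘ₗ f))

/-- `(1 ⊗ f) : P j ⊗_A P m → P j`, `x ⊗ y ↦ x · f(y)`, for `f : P m → A`
(the Koszul sign is inserted at use sites). -/
def collapseR (act : Bimod (k := k) A P) {m : ℤ} (f : P m →ₗ[k] A) (j : ℤ) :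
    TensA act j m →ₗ[k] P j :=
  liftQOr0 _ (TensorProduct.lift
    (LinearMap.flip ((act.actR j).toLinearMap ∘ₗ
      (opLinearEquiv k : A ≃ₗ[k] Aᵐᵒᵖ).toLinearMap ∘ₗ f)))

/-- The total collapse map `(f ⊗ 1) : (P ⊗_A P)_i → P_{i-m}` for a cochain
`f : P m → A`; it is `f(x) · y` on the component `(m, i-m)` and `0` on all others. -/
def fTensorOne (act : Bimod (k := k) A P) {m : ℤ} (f : P m →ₗ[k] A) (i : ℤ) :
    DTarget act i →ₗ[k] P (i - m) :=
  DirectSum.toModule k (DiagIdx i) (P (i - m)) fun p =>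
    if h : p.1.1 = m then
      pcast (show p.1.2 = i - m by have := p.2; omega) ∘ₗ
        collapseL act f p.1.2 ∘ₗ tcast act h rfl
    else 0

/-- The total collapse map `(1 ⊗ f) : (P ⊗_A P)_i → P_{i-m}` for a cochain
`f : P m → A`, with the Koszul sign `(−1)^{m·j}` on the component `(j, m)`. -/
def oneTensorF (act : Bimod (k := k) A P) {m : ℤ} (f : P m →ₗ[k] A) (i : ℤ) :
    DTarget act i →ₗ[k] P (i - m) :=
  DirectSum.toModule k (DiagIdx i) (P (i - m)) fun p =>
    if h : p.1.2 = m then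
      ((m * p.1.1).negOnePow : ℤ) •
        (pcast (show p.1.1 = i - m by have := p.2; omega) ∘ₗ
          collapseR act f p.1.1 ∘ₗ tcast act rfl h)
    else 0

/-- The augmentation `(P ⊗_A P)_0 → A ⊗_A A ≅ A`, `x ⊗ y ↦ μ(x)·μ(y)`,
induced by the augmentation `μ : P 0 → A`. -/
def muCollapse (act : Bimod (k := k) A P) (μ : P 0 →ₗ[k] A) :
    DTarget act 0 →ₗ[k] A :=
  DirectSum.toModule k (DiagIdx 0) A fun p =>
    if h : p.1.1 = 0 then
      liftQOr0 _ (TensorProduct.lift ((((LinearMap.mul k A) ∘ₗ μ).compl₂ μ))) ∘ₗ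
        tcast act h (show p.1.2 = 0 by have := p.2; omega)
    else 0

/-- Left action of `A` on `(P ⊗_A P)_i` (componentwise, through the leftmost factor). -/
def actLDT (act : Bimod (k := k) A P) (i : ℤ) (a : A) :
    DTarget act i →ₗ[k] DTarget act i :=
  DFinsupp.mapRange.linearMap (fun p : DiagIdx i => actLTensA act p.1.1 p.1.2 a)

/-- Right action of `A` on `(P ⊗_A P)_i` (componentwise, through the rightmost factor). -/
def actRDT (act : Bimod (k := k) A P) (i : ℤ) (b : Aᵐᵒᵖ) :
    DTarget act i →ₗ[k] DTarget act i :=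
  DFinsupp.mapRange.linearMap (fun p : DiagIdx i => actRTensA act p.1.1 p.1.2 b)

/-! ### Resolutions and diagonal maps -/

/-- The data `(P, d, μ)` is a nonnegatively graded projective resolution of `A`
by `A`-bimodules (`A^e`-modules). -/
structure IsResolution (act : Bimod (k := k) A P)
    (d : ∀ i, P i →ₗ[k] P (i - 1)) (μ : P 0 →ₗ[k] A) : Prop where
  /-- the actions commute, i.e. each `P i` is an `A`-bimodule -/
  actComm : act.IsCommuting
  /-- the differential is a map of bimodules -/
  dBimap : ∀ i, IsBimap act (d i)
  /-- the augmentation is a map of bimodules -/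
  μBimap : IsBimapToAlg act μ
  /-- `P` is a complex -/
  dd : ∀ i, d (i - 1) ∘ₗ d i = 0
  /-- `P` vanishes in negative degrees -/
  zero_neg : ∀ i, i < 0 → Subsingleton (P i)
  /-- the augmented complex is exact in positive degrees -/
  exact_pos : ∀ i, 1 ≤ i →
    LinearMap.range (pcast (show i + 1 - 1 = i by omega) ∘ₗ d (i + 1)) = LinearMap.ker (d i)
  /-- `μ ∘ d₁ = 0` and exactness at degree `0` -/
  exact_zero : LinearMap.range (d 1) = LinearMap.ker μ
  /-- `μ` is surjective -/
  surj : Function.Surjective μ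
  /-- each `P i` is projective as an `A^e`-module -/
  proj : ∀ i, letI := envModule act actComm i; Module.Projective (A ⊗[k] Aᵐᵒᵖ) (P i)

/-- `Δ : P → P ⊗_A P` is a chain map of complexes of bimodules lifting the
identity map of `A` (i.e. compatible with the augmentations). -/
structure IsDiagonal (act : Bimod (k := k) A P) (d : ∀ i, P i →ₗ[k] P (i - 1))
    (μ : P 0 →ₗ[k] A) (Δ : ∀ i, P i →ₗ[k] DTarget act i) : Prop where
  /-- `Δ` is a map of bimodules in each degree -/
  bimapL : ∀ (i : ℤ) (a : A), Δ i ∘ₗ act.actL i a = actLDT act i a ∘ₗ Δ i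
  bimapR : ∀ (i : ℤ) (b : Aᵐᵒᵖ), Δ i ∘ₗ act.actR i b = actRDT act i b ∘ₗ Δ i
  /-- `Δ` is a chain map -/
  chain : ∀ i, dDT act d i ∘ₗ Δ i = Δ (i - 1) ∘ₗ d i
  /-- `Δ` lifts the identity map of `A`, i.e. it is compatible with the augmentations
  under the identification `A ⊗_A A ≅ A` -/
  counit : ∀ z : P 0, muCollapse act μ (Δ 0 z) = μ z

/-- `f : P m → A` is a cocycle: `f ∘ d = 0`. -/
def IsCocycle {m : ℤ} (d : ∀ i, P i →ₗ[k] P (i - 1)) (f : P m →ₗ[k] A) : Prop :=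
  f ∘ₗ pcast (show m + 1 - 1 = m by omega) ∘ₗ d (m + 1) = 0

/-- Volkov's homotopy-lifting condition for a cocycle `f : P m → A` with respect to a
diagonal map `Δ`:  `ψ` is a family of bimodule maps `P i → P_{i-m+1}` with
`d ∘ ψ − (−1)^{m−1} ψ ∘ d = (f ⊗ 1 − 1 ⊗ f) ∘ Δ`, and `μ ∘ ψ − (−1)^{m−1} f ∘ ψ_P`
is a coboundary for some bimodule homotopy `ψ_P` with
`d ∘ ψ_P + ψ_P ∘ d = (μ ⊗ 1 − 1 ⊗ μ) ∘ Δ`. -/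
def IsHomotopyLifting (act : Bimod (k := k) A P) (d : ∀ i, P i →ₗ[k] P (i - 1))
    (μ : P 0 →ₗ[k] A) (Δ : ∀ i, P i →ₗ[k] DTarget act i)
    {m : ℤ} (f : P m →ₗ[k] A) (ψ : ∀ i, P i →ₗ[k] P (i - m + 1)) : Prop :=
  (∀ i, IsBimap act (ψ i)) ∧
  (∀ i, pcast (show i - m + 1 - 1 = i - m by omega) ∘ₗ d (i - m + 1) ∘ₗ ψ i
      - ((m - 1).negOnePow : ℤ) •
          (pcast (show i - 1 - m + 1 = i - m by omega) ∘ₗ ψ (i - 1) ∘ₗ d i)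
    = fTensorOne act f i ∘ₗ Δ i - oneTensorF act f i ∘ₗ Δ i) ∧
  (∃ ψP : ∀ i, P i →ₗ[k] P (i + 1),
    (∀ i, IsBimap act (ψP i)) ∧
    (∀ i, pcast (show i + 1 - 1 = i by omega) ∘ₗ d (i + 1) ∘ₗ ψP i
        + pcast (show i - 1 + 1 = i by omega) ∘ₗ ψP (i - 1) ∘ₗ d i
      = pcast (show i - 0 = i by omega) ∘ₗ (fTensorOne act μ i ∘ₗ Δ i - oneTensorF act μ i ∘ₗ Δ i)) ∧
    (∃ γ : P (m - 2) →ₗ[k] A, IsBimapToAlg act γ ∧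
      μ ∘ₗ pcast (show m - 1 - m + 1 = 0 by omega) ∘ₗ ψ (m - 1)
        - ((m - 1).negOnePow : ℤ) • (f ∘ₗ pcast (show m - 1 + 1 = m by omega) ∘ₗ ψP (m - 1))
      = γ ∘ₗ pcast (show m - 1 - 1 = m - 2 by omega) ∘ₗ d (m - 1)))

/-! ### The total tensor product complex `P ⊗ₖ Q` over the algebra `A ⊗ₖ B` -/

section Product

variable {B : Type u} [Ring B] [Algebra k B]
variable {Q : ℤ → Type u} [∀ i, AddCommGroup (Q i)] [∀ i, Module k (Q i)]

/-- The degree-`r` component `(P ⊗ Q)_r = ⨁_{i+j=r} P i ⊗ₖ Q j` of the total complex. -/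
abbrev PQmod (k : Type u) [Field k] (P Q : ℤ → Type u)
    [∀ i, AddCommGroup (P i)] [∀ i, Module k (P i)]
    [∀ i, AddCommGroup (Q i)] [∀ i, Module k (Q i)] (r : ℤ) : Type u :=
  ⨁ (p : DiagIdx r), P p.1.1 ⊗[k] Q p.1.2

instance (k : Type u) [Field k] (P Q : ℤ → Type u)
    [∀ i, AddCommGroup (P i)] [∀ i, Module k (P i)]
    [∀ i, AddCommGroup (Q i)] [∀ i, Module k (Q i)] (r : ℤ) :
    AddCommGroup (PQmod k P Q r) :=
  inferInstanceAs (AddCommGroup (⨁ (p : DiagIdx r), P p.1.1 ⊗[k] Q p.1.2))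

instance (k : Type u) [Field k] (P Q : ℤ → Type u)
    [∀ i, AddCommGroup (P i)] [∀ i, Module k (P i)]
    [∀ i, AddCommGroup (Q i)] [∀ i, Module k (Q i)] (r : ℤ) :
    Module k (PQmod k P Q r) :=
  inferInstanceAs (Module k (⨁ (p : DiagIdx r), P p.1.1 ⊗[k] Q p.1.2))

/-- Inclusion of the `(i,j)` component into `(P ⊗ Q)_r`. -/
def inclPQ {r : ℤ} (p : DiagIdx r) : (P p.1.1 ⊗[k] Q p.1.2) →ₗ[k] PQmod k P Q r :=
  DirectSum.lof k (DiagIdx r) (fun q : DiagIdx r => P q.1.1 ⊗[k] Q q.1.2) p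

/-- A family of algebra actions on the members of a family of modules gives an
algebra action on their direct sum, componentwise. -/
def compwiseEnd {ι : Type} [DecidableEq ι] (M : ι → Type u)
    [∀ p, AddCommGroup (M p)] [∀ p, Module k (M p)]
    (C : Type u) [Ring C] [Algebra k C] (φ : ∀ p, C →ₐ[k] Module.End k (M p)) :
    C →ₐ[k] Module.End k (⨁ p, M p) where
  toFun c := DirectSum.toModule k ι (⨁ p, M p) (fun p => DirectSum.lof k ι M p ∘ₗ φ p c)
  map_one' := by
    refine DirectSum.linearMap_ext k fun p => ?_
    ext x
    simp [DirectSum.toModule_lof]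
  map_mul' c c' := by
    refine DirectSum.linearMap_ext k fun p => ?_
    ext x
    simp [DirectSum.toModule_lof, Module.End.mul_apply]
  map_zero' := by
    refine DirectSum.linearMap_ext k fun p => ?_
    ext x
    simp [DirectSum.toModule_lof]
  map_add' c c' := by
    refine DirectSum.linearMap_ext k fun p => ?_
    ext x
    simp [DirectSum.toModule_lof, map_add]
  commutes' r := by
    refine DirectSum.linearMap_ext k fun p => ?_
    ext x
    simp [DirectSum.toModule_lof, AlgHom.commutes, Module.algebraMap_end_apply]

/-- The left action of `A` on the component `P i ⊗ₖ Q j` (through the `P` factor). -/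
def endTensL (actP : Bimod (k := k) A P) (i j : ℤ) :
    A →ₐ[k] Module.End k (P i ⊗[k] Q j) :=
  (Module.endTensorEndAlgHom (R := k) (S := k) (A := k) (M := P i) (N := Q j)).comp
    (Algebra.TensorProduct.includeLeft.comp (actP.actL i))

/-- The right action of `A` on the component `P i ⊗ₖ Q j` (through the `P` factor). -/
def endTensLop (actP : Bimod (k := k) A P) (i j : ℤ) :
    Aᵐᵒᵖ →ₐ[k] Module.End k (P i ⊗[k] Q j) :=
  (Module.endTensorEndAlgHom (R := k) (S := k) (A := k) (M := P i) (N := Q j)).comp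
    (Algebra.TensorProduct.includeLeft.comp (actP.actR i))

/-- The left action of `B` on the component `P i ⊗ₖ Q j` (through the `Q` factor). -/
def endTensR (actQ : Bimod (k := k) B Q) (i j : ℤ) :
    B →ₐ[k] Module.End k (P i ⊗[k] Q j) :=
  (Module.endTensorEndAlgHom (R := k) (S := k) (A := k) (M := P i) (N := Q j)).comp
    (Algebra.TensorProduct.includeRight.comp (actQ.actL j))

/-- The right action of `B` on the component `P i ⊗ₖ Q j` (through the `Q` factor). -/
def endTensRop (actQ : Bimod (k := k) B Q) (i j : ℤ) :
    Bᵐᵒᵖ →ₐ[k] Module.End k (P i ⊗[k] Q j) :=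
  (Module.endTensorEndAlgHom (R := k) (S := k) (A := k) (M := P i) (N := Q j)).comp
    (Algebra.TensorProduct.includeRight.comp (actQ.actR j))

/-- The left action of `A ⊗ₖ B` on `(P ⊗ Q)_r`:
`(a⊗b)·(p⊗q) = (a·p)⊗(b·q)` componentwise. -/
def prodActL (actP : Bimod (k := k) A P) (actQ : Bimod (k := k) B Q) (r : ℤ) :
    (A ⊗[k] B) →ₐ[k] Module.End k (PQmod k P Q r) :=
  Algebra.TensorProduct.lift
    (compwiseEnd _ _ (fun p : DiagIdx r => endTensL actP p.1.1 p.1.2))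
    (compwiseEnd _ _ (fun p : DiagIdx r => endTensR actQ p.1.1 p.1.2))
    (fun a b => by
      show _ * _ = _ * _
      refine DirectSum.linearMap_ext k fun p => ?_
      refine TensorProduct.ext' fun x y => ?_
      simp [compwiseEnd, DirectSum.toModule_lof, Module.End.mul_apply,
        endTensL, endTensR, Module.endTensorEndAlgHom_apply])

/-- The right action of `A ⊗ₖ B` on `(P ⊗ Q)_r`:
`(p⊗q)·(a'⊗b') = (p·a')⊗(q·b')` componentwise. -/
def prodActR (actP : Bimod (k := k) A P) (actQ : Bimod (k := k) B Q) (r : ℤ) :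
    (A ⊗[k] B)ᵐᵒᵖ →ₐ[k] Module.End k (PQmod k P Q r) :=
  (Algebra.TensorProduct.lift
    (compwiseEnd _ _ (fun p : DiagIdx r => endTensLop actP p.1.1 p.1.2))
    (compwiseEnd _ _ (fun p : DiagIdx r => endTensRop actQ p.1.1 p.1.2))
    (fun a b => by
      show _ * _ = _ * _
      refine DirectSum.linearMap_ext k fun p => ?_
      refine TensorProduct.ext' fun x y => ?_
      simp [compwiseEnd, DirectSum.toModule_lof, Module.End.mul_apply,
        endTensLop, endTensRop, Module.endTensorEndAlgHom_apply])).comp (Algebra.TensorProduct.opAlgEquiv k k A B).symm.toAlgHom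

/-- The `(A ⊗ₖ B)`-bimodule structure
`(a⊗b)(p⊗q)(a'⊗b') = (a·p·a') ⊗ (b·q·b')` on the components of `P ⊗ Q`. -/
def prodBimod (actP : Bimod (k := k) A P) (actQ : Bimod (k := k) B Q) :
    Bimod (k := k) (A ⊗[k] B) (PQmod k P Q) where
  actL := prodActL actP actQ
  actR := prodActR actP actQ

/-- The Koszul-signed total differential `d(p⊗q) = d(p)⊗q + (−1)^{|p|} p⊗d(q)`
on `P ⊗ Q`. -/
def prodD (dP : ∀ i, P i →ₗ[k] P (i - 1)) (dQ : ∀ i, Q i →ₗ[k] Q (i - 1)) (r : ℤ) :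
    PQmod k P Q r →ₗ[k] PQmod k P Q (r - 1) :=
  DirectSum.toModule k (DiagIdx r) (PQmod k P Q (r - 1)) fun p =>
    inclPQ (⟨(p.1.1 - 1, p.1.2), by have := p.2; omega⟩ : DiagIdx (r - 1)) ∘ₗ
        LinearMap.rTensor (Q p.1.2) (dP p.1.1)
      + (p.1.1.negOnePow : ℤ) •
        (inclPQ (⟨(p.1.1, p.1.2 - 1), by have := p.2; omega⟩ : DiagIdx (r - 1)) ∘ₗ
          LinearMap.lTensor (P p.1.1) (dQ p.1.2))

/-- The augmentation `μ_{P⊗Q} = μ_P ⊗ μ_Q : (P ⊗ Q)_0 → A ⊗ₖ B`. -/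
def prodMu (μP : P 0 →ₗ[k] A) (μQ : Q 0 →ₗ[k] B) :
    PQmod k P Q 0 →ₗ[k] A ⊗[k] B :=
  DirectSum.toModule k (DiagIdx 0) (A ⊗[k] B) fun p =>
    if h : p.1.1 = 0 then
      TensorProduct.map μP μQ ∘ₗ
        TensorProduct.map (pcast h) (pcast (show p.1.2 = 0 by have := p.2; omega))
    else 0

/-- The cochain `f ⊗ g : (P⊗Q)_{m+n} → A ⊗ₖ B`, vanishing on the components
`P_i ⊗ Q_j` with `(i,j) ≠ (m,n)` and sending `x ⊗ y ↦ (−1)^{mn} f(x) ⊗ g(y)`. -/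
def cupTensor {m n : ℤ} (f : P m →ₗ[k] A) (g : Q n →ₗ[k] B) :
    PQmod k P Q (m + n) →ₗ[k] A ⊗[k] B :=
  DirectSum.toModule k (DiagIdx (m + n)) (A ⊗[k] B) fun p =>
    if h : p.1.1 = m ∧ p.1.2 = n then
      ((m * n).negOnePow : ℤ) •
        (TensorProduct.map f g ∘ₗ TensorProduct.map (pcast h.1) (pcast h.2))
    else 0

end Product

section Product2

variable {B : Type u} [Ring B] [Algebra k B]
variable {Q : ℤ → Type u} [∀ i, AddCommGroup (Q i)] [∀ i, Module k (Q i)]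

/-- The component of the map
`σ⁻¹ : (P ⊗_A P) ⊗ₖ (Q ⊗_B Q) → (P ⊗ᵗ Q) ⊗_{A⊗B} (P ⊗ᵗ Q)`,
`(x⊗x') ⊗ (y⊗y') ↦ (−1)^{u·l} (x⊗y) ⊗ (x'⊗y')` for `x ∈ P j`, `x' ∈ P u`,
`y ∈ Q l`, `y' ∈ Q v`. -/
def sigmaInv (actP : Bimod (k := k) A P) (actQ : Bimod (k := k) B Q)
    (j u l v : ℤ) :
    (TensA actP j u ⊗[k] TensA actQ l v) →ₗ[k]
      TensA (prodBimod actP actQ) (j + l) (u + v) :=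
  letI base : ((P j ⊗[k] P u) ⊗[k] (Q l ⊗[k] Q v)) →ₗ[k]
      TensA (prodBimod actP actQ) (j + l) (u + v) :=
    ((u * l).negOnePow : ℤ) •
      ((bal (prodBimod actP actQ) (j + l) (u + v)).mkQ ∘ₗ
        TensorProduct.map
          (inclPQ (⟨(j, l), rfl⟩ : DiagIdx (j + l)))
          (inclPQ (⟨(u, v), rfl⟩ : DiagIdx (u + v))) ∘ₗ
        (TensorProduct.tensorTensorTensorComm k (P j) (P u) (Q l) (Q v)).toLinearMap)
  TensorProduct.lift
    (liftQOr0 (bal actQ l v) (liftQOr0 (bal actP j u) (TensorProduct.curry base)).flip).flip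

/-- The degree-`r` component of the tensor product of complexes
`(P ⊗_A P) ⊗ₖ (Q ⊗_B Q)`. -/
abbrev TensTens (actP : Bimod (k := k) A P) (actQ : Bimod (k := k) B Q) (r : ℤ) : Type u :=
  PQmod k (DTarget actP) (DTarget actQ) r

/-- The total map `σ⁻¹ : (P ⊗_A P) ⊗ₖ (Q ⊗_B Q) → (P ⊗ Q) ⊗_{A⊗B} (P ⊗ Q)` in degree `r`. -/
def sigmaInvTot (actP : Bimod (k := k) A P) (actQ : Bimod (k := k) B Q) (r : ℤ) :
    TensTens actP actQ r →ₗ[k] DTarget (prodBimod actP actQ) r :=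
  DirectSum.toModule k (DiagIdx r) _ fun w =>
    (DirectSum.toModule k _ _ fun ce : DiagIdx w.1.1 × DiagIdx w.1.2 =>
      inclDT (prodBimod actP actQ)
          (⟨(ce.1.1.1 + ce.2.1.1, ce.1.1.2 + ce.2.1.2), by
            have h1 := ce.1.2; have h2 := ce.2.2; have h3 := w.2; omega⟩ : DiagIdx r) ∘ₗ
        sigmaInv actP actQ ce.1.1.1 ce.1.1.2 ce.2.1.1 ce.2.1.2) ∘ₗ
    (TensorProduct.directSum k k
      (fun c : DiagIdx w.1.1 => TensA actP c.1.1 c.1.2)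
      (fun e : DiagIdx w.1.2 => TensA actQ e.1.1 e.1.2)).toLinearMap

/-- The map `Δ_P ⊗ Δ_Q : P ⊗ Q → (P ⊗_A P) ⊗ₖ (Q ⊗_B Q)` in degree `i`. -/
def deltaTensor (actP : Bimod (k := k) A P) (actQ : Bimod (k := k) B Q)
    (ΔP : ∀ i, P i →ₗ[k] DTarget actP i) (ΔQ : ∀ i, Q i →ₗ[k] DTarget actQ i) (i : ℤ) :
    PQmod k P Q i →ₗ[k] TensTens actP actQ i :=
  DirectSum.toModule k (DiagIdx i) _ fun p =>
    inclPQ (P := DTarget actP) (Q := DTarget actQ) p ∘ₗ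
      TensorProduct.map (ΔP p.1.1) (ΔQ p.1.2)

/-- The diagonal map `Δ_{P⊗Q} := σ⁻¹ ∘ (Δ_P ⊗ Δ_Q)` for the total complex `P ⊗ Q`. -/
def prodDelta (actP : Bimod (k := k) A P) (actQ : Bimod (k := k) B Q)
    (ΔP : ∀ i, P i →ₗ[k] DTarget actP i) (ΔQ : ∀ i, Q i →ₗ[k] DTarget actQ i) (i : ℤ) :
    PQmod k P Q i →ₗ[k] DTarget (prodBimod actP actQ) i :=
  sigmaInvTot actP actQ i ∘ₗ deltaTensor actP actQ ΔP ΔQ i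

/-- `ψ_{f⊗g} := ψ_f ⊗ (1⊗g)Δ_Q + (−1)^m (f⊗1)Δ_P ⊗ ψ_g` (with Koszul signs). -/
def psiCup (actP : Bimod (k := k) A P) (actQ : Bimod (k := k) B Q)
    (ΔP : ∀ i, P i →ₗ[k] DTarget actP i) (ΔQ : ∀ i, Q i →ₗ[k] DTarget actQ i)
    {m n : ℤ} (f : P m →ₗ[k] A) (g : Q n →ₗ[k] B)
    (ψf : ∀ i, P i →ₗ[k] P (i - m + 1)) (ψg : ∀ i, Q i →ₗ[k] Q (i - n + 1)) (r : ℤ) :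
    PQmod k P Q r →ₗ[k] PQmod k P Q (r - (m + n) + 1) :=
  DirectSum.toModule k (DiagIdx r) (PQmod k P Q (r - (m + n) + 1)) fun p =>
    ((n * p.1.1).negOnePow : ℤ) •
      (inclPQ (⟨(p.1.1 - m + 1, p.1.2 - n), by
          have := p.2; omega⟩ : DiagIdx (r - (m + n) + 1)) ∘ₗ
        TensorProduct.map (ψf p.1.1) (oneTensorF actQ g p.1.2 ∘ₗ ΔQ p.1.2))
    + ((m.negOnePow : ℤ) * (((n - 1) * p.1.1).negOnePow : ℤ)) •
      (inclPQ (⟨(p.1.1 - m, p.1.2 - n + 1), by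
          have := p.2; omega⟩ : DiagIdx (r - (m + n) + 1)) ∘ₗ
        TensorProduct.map (fTensorOne actP f p.1.1 ∘ₗ ΔP p.1.1) (ψg p.1.2))

/-- `ψ_{P⊗Q} := ψ_P ⊗ (μ_Q⊗1)Δ_Q + (1⊗μ_P)Δ_P ⊗ ψ_Q` (with Koszul signs). -/
def psiProd (actP : Bimod (k := k) A P) (actQ : Bimod (k := k) B Q)
    (ΔP : ∀ i, P i →ₗ[k] DTarget actP i) (ΔQ : ∀ i, Q i →ₗ[k] DTarget actQ i)
    (μP : P 0 →ₗ[k] A) (μQ : Q 0 →ₗ[k] B)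
    (ψP : ∀ i, P i →ₗ[k] P (i + 1)) (ψQ : ∀ i, Q i →ₗ[k] Q (i + 1)) (r : ℤ) :
    PQmod k P Q r →ₗ[k] PQmod k P Q (r + 1) :=
  DirectSum.toModule k (DiagIdx r) (PQmod k P Q (r + 1)) fun p =>
    (inclPQ (⟨(p.1.1 + 1, p.1.2), by have := p.2; omega⟩ : DiagIdx (r + 1)) ∘ₗ
      TensorProduct.map (ψP p.1.1)
        (pcast (show p.1.2 - 0 = p.1.2 by omega) ∘ₗ fTensorOne actQ μQ p.1.2 ∘ₗ ΔQ p.1.2))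
    + (p.1.1.negOnePow : ℤ) •
      (inclPQ (⟨(p.1.1, p.1.2 + 1), by have := p.2; omega⟩ : DiagIdx (r + 1)) ∘ₗ
        TensorProduct.map
          (pcast (show p.1.1 - 0 = p.1.1 by omega) ∘ₗ oneTensorF actP μP p.1.1 ∘ₗ ΔP p.1.1)
          (ψQ p.1.2))

/-- The cup product `(g ⊗ g') ∘ Δ`-collapse: the cochain `(P⊗_A P)_{n+n'} → A`
given on the `(n,n')` component by `x ⊗ y ↦ (−1)^{n'n} g(x)·g'(y)`. -/
def cupDT (act : Bimod (k := k) A P) {n n' : ℤ} (g : P n →ₗ[k] A) (g' : P n' →ₗ[k] A) :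
    DTarget act (n + n') →ₗ[k] A :=
  DirectSum.toModule k (DiagIdx (n + n')) A fun p =>
    if h : p.1.1 = n ∧ p.1.2 = n' then
      ((n' * n).negOnePow : ℤ) •
        (liftQOr0 _ (TensorProduct.lift (((LinearMap.mul k A) ∘ₗ g).compl₂ g')) ∘ₗ
          tcast act h.1 h.2)
    else 0

end Product2

section Product3

variable {B : Type u} [Ring B] [Algebra k B]
variable {Q : ℤ → Type u} [∀ i, AddCommGroup (Q i)] [∀ i, Module k (Q i)]

/-- Component of the Grimley–Nguyen–Witherspoon map `σ`:
`(x⊗y) ⊗ (x'⊗y') ↦ (−1)^{ju} (x⊗x') ⊗ (y⊗y')` on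
`(P_i ⊗ Q_j) ⊗ (P_u ⊗ Q_v)`. -/
def sigmaFwdComp (actP : Bimod (k := k) A P) (actQ : Bimod (k := k) B Q)
    {s t r : ℤ} (hst : s + t = r) (ce : DiagIdx s × DiagIdx t) :
    ((P ce.1.1.1 ⊗[k] Q ce.1.1.2) ⊗[k] (P ce.2.1.1 ⊗[k] Q ce.2.1.2)) →ₗ[k]
      TensTens actP actQ r :=
  ((ce.1.1.2 * ce.2.1.1).negOnePow : ℤ) •
    (inclPQ (P := DTarget actP) (Q := DTarget actQ)
        (⟨(ce.1.1.1 + ce.2.1.1, ce.1.1.2 + ce.2.1.2), by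
          have h1 := ce.1.2; have h2 := ce.2.2; omega⟩ : DiagIdx r) ∘ₗ
      TensorProduct.map
        (inclDT actP (⟨(ce.1.1.1, ce.2.1.1), rfl⟩ : DiagIdx (ce.1.1.1 + ce.2.1.1)) ∘ₗ
          (bal actP ce.1.1.1 ce.2.1.1).mkQ)
        (inclDT actQ (⟨(ce.1.1.2, ce.2.1.2), rfl⟩ : DiagIdx (ce.1.1.2 + ce.2.1.2)) ∘ₗ
          (bal actQ ce.1.1.2 ce.2.1.2).mkQ) ∘ₗ
      (TensorProduct.tensorTensorTensorComm k
        (P ce.1.1.1) (Q ce.1.1.2) (P ce.2.1.1) (Q ce.2.1.2)).toLinearMap)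

/-- The map `σ` before descending to the balanced tensor product. -/
def sigmaFwdPre (actP : Bimod (k := k) A P) (actQ : Bimod (k := k) B Q)
    {s t r : ℤ} (hst : s + t = r) :
    (PQmod k P Q s ⊗[k] PQmod k P Q t) →ₗ[k] TensTens actP actQ r :=
  (DirectSum.toModule k (DiagIdx s × DiagIdx t) (TensTens actP actQ r)
      (fun ce => sigmaFwdComp actP actQ hst ce)) ∘ₗ
    (TensorProduct.directSum k k
      (fun c : DiagIdx s => P c.1.1 ⊗[k] Q c.1.2)
      (fun e : DiagIdx t => P e.1.1 ⊗[k] Q e.1.2)).toLinearMap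

/-- The Grimley–Nguyen–Witherspoon map
`σ : (P ⊗ Q) ⊗_{A⊗B} (P ⊗ Q) → (P ⊗_A P) ⊗ₖ (Q ⊗_B Q)`, given on the component
`(P_i ⊗ Q_j) ⊗_{A⊗B} (P_u ⊗ Q_v)` by
`(x⊗y) ⊗ (x'⊗y') ↦ (−1)^{ju} (x⊗x') ⊗ (y⊗y')`. -/
def sigmaFwdAt (actP : Bimod (k := k) A P) (actQ : Bimod (k := k) B Q)
    {s t r : ℤ} (hst : s + t = r) :
    TensA (prodBimod actP actQ) s t →ₗ[k] TensTens actP actQ r :=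
  liftQOr0 (bal (prodBimod actP actQ) s t) (sigmaFwdPre actP actQ hst)

/-- The total map `σ` in degree `r`. -/
def sigmaFwd (actP : Bimod (k := k) A P) (actQ : Bimod (k := k) B Q) (r : ℤ) :
    DTarget (prodBimod actP actQ) r →ₗ[k] TensTens actP actQ r :=
  DirectSum.toModule k (DiagIdx r) (TensTens actP actQ r) fun st =>
    sigmaFwdAt actP actQ st.2

/-- Left action of the pure tensor `a ⊗ b ∈ A ⊗ₖ B` on `(P ⊗_A P) ⊗ₖ (Q ⊗_B Q)`. -/
def actLTensTens (actP : Bimod (k := k) A P) (actQ : Bimod (k := k) B Q) (r : ℤ)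
    (a : A) (b : B) : TensTens actP actQ r →ₗ[k] TensTens actP actQ r :=
  DFinsupp.mapRange.linearMap
    (fun w : DiagIdx r => TensorProduct.map (actLDT actP w.1.1 a) (actLDT actQ w.1.2 b))

/-- Right action of the pure tensor `a ⊗ b ∈ A ⊗ₖ B` on `(P ⊗_A P) ⊗ₖ (Q ⊗_B Q)`. -/
def actRTensTens (actP : Bimod (k := k) A P) (actQ : Bimod (k := k) B Q) (r : ℤ)
    (a : A) (b : B) : TensTens actP actQ r →ₗ[k] TensTens actP actQ r :=
  DFinsupp.mapRange.linearMap
    (fun w : DiagIdx r => TensorProduct.map (actRDT actP w.1.1 (op a)) (actRDT actQ w.1.2 (op b)))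

end Product3

/-! ### The concrete example: the truncated polynomial ring `k[x]/(x²)` -/

section Concrete

open Polynomial

/-- The truncated polynomial ring `A = k[x]/(x²)`. -/
abbrev TP (k : Type u) [Field k] : Type u :=
  Polynomial k ⧸ Ideal.span ({Polynomial.X ^ 2} : Set (Polynomial k))

/-- The generator `x` of `k[x]/(x²)`. -/
def xGen (k : Type u) [Field k] : TP k := Ideal.Quotient.mk _ Polynomial.X

/-- `R = A ⊗ₖ A`, the enveloping algebra of the commutative algebra `A`. -/
abbrev RA (k : Type u) [Field k] : Type u := TP k ⊗[k] TP k

instance : CommRing (RA k) := inferInstance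
instance : Module (RA k) (RA k) := Semiring.toModule

/-- `u = x⊗1 − 1⊗x`. -/
def uE (k : Type u) [Field k] : RA k := xGen k ⊗ₜ[k] 1 - 1 ⊗ₜ[k] xGen k

/-- `v = x⊗1 + 1⊗x`. -/
def vE (k : Type u) [Field k] : RA k := xGen k ⊗ₜ[k] 1 + 1 ⊗ₜ[k] xGen k

/-- The components of the 2-periodic resolution: `P i = R` for `i ≥ 0` and `0`
(the trivial module) for `i < 0`. -/
def PC (k : Type u) [Field k] : ℤ → Type u
  | .ofNat _ => RA k
  | .negSucc _ => PUnit

instance : ∀ i, AddCommGroup (PC k i)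
  | .ofNat _ => inferInstanceAs (AddCommGroup (RA k))
  | .negSucc _ => inferInstanceAs (AddCommGroup PUnit)

instance : ∀ i, Module k (PC k i)
  | .ofNat _ => inferInstanceAs (Module k (RA k))
  | .negSucc _ => inferInstanceAs (Module k PUnit.{u+1})

/-- Identification of the nonnegative components with `R`. -/
def toR (k : Type u) [Field k] : ∀ (i : ℤ), 0 ≤ i → (PC k i ≃ₗ[k] RA k)
  | .ofNat _, _ => LinearEquiv.refl k (RA k)
  | .negSucc n, h => absurd h (not_le.mpr (Int.negSucc_lt_zero n))

/-- The free generator `e_i = 1 ⊗ 1` of `P i` (`e_i = 0` for `i < 0`). -/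
def eB (k : Type u) [Field k] : ∀ i : ℤ, PC k i
  | .ofNat _ => (1 : RA k)
  | .negSucc _ => PUnit.unit

/-- Left multiplication of `R` on itself, as an algebra map into endomorphisms. -/
def mulHom (k : Type u) [Field k] : RA k →ₐ[k] Module.End k (RA k) :=
  Algebra.lsmul k k (RA k)

/-- `unop` as an algebra map, for the commutative algebra `A`. -/
def unopAlg (k : Type u) [Field k] : (TP k)ᵐᵒᵖ →ₐ[k] TP k where
  toFun := unop
  map_one' := rfl
  map_mul' z w := by simp [mul_comm]
  map_zero' := rfl
  map_add' _ _ := rfl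
  commutes' _ := rfl

/-- The unique algebra action on the trivial module. -/
def trivAct.{u_1} (k : Type u) [Field k] (C : Type u) [Ring C] [Algebra k C] :
    C →ₐ[k] Module.End k PUnit.{u_1+1} where
  toFun _ := 1
  map_one' := rfl
  map_mul' _ _ := Subsingleton.elim _ _
  map_zero' := Subsingleton.elim _ _
  map_add' _ _ := Subsingleton.elim _ _
  commutes' _ := Subsingleton.elim _ _

/-- The `A`-bimodule structure on the resolution `P`: in nonnegative degrees,
`a` acts on the left by multiplication by `a⊗1` and on the right by
multiplication by `1⊗a`. -/
def actC (k : Type u) [Field k] : Bimod (k := k) (TP k) (PC k) where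
  actL
    | .ofNat _n => (mulHom k).comp (Algebra.TensorProduct.includeLeft (S := k))
    | .negSucc _n => trivAct k (TP k)
  actR
    | .ofNat _n => ((mulHom k).comp Algebra.TensorProduct.includeRight).comp (unopAlg k)
    | .negSucc _n => trivAct k (TP k)ᵐᵒᵖ

/-- The differential of the resolution `P`: multiplication by `u` in odd degrees
and by `v` in even positive degrees. -/
def dC (k : Type u) [Field k] (i : ℤ) : PC k i →ₗ[k] PC k (i - 1) :=
  letI := Classical.dec (1 ≤ i)
  if h : 1 ≤ i then
    ((toR k (i - 1) (by omega)).symm.toLinearMap ∘ₗ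
      LinearMap.mulLeft k (if Odd i then uE k else vE k) ∘ₗ
      (toR k i (by omega)).toLinearMap)
  else 0

/-- The augmentation `μ : P 0 = A ⊗ A → A`, the multiplication map. -/
def muC (k : Type u) [Field k] : PC k 0 →ₗ[k] TP k :=
  LinearMap.mul' k (TP k) ∘ₗ (toR k 0 le_rfl).toLinearMap

end Concrete

/-!
STATEMENT 13: Let `f ∈ Hom_{A^e}(P_1, A)` be the cocycle with `f(e_1) = x` (and
`f(e_i) = 0` for `i ≠ 1`), and let `ψ_f` be the family of `(A⊗A)`-linear maps
`ψ_i : P_i → P_i` with `ψ_i(e_i) = i·e_i`. Then for every `i ≥ 1`,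
`(d_i∘ψ_i − ψ_{i−1}∘d_i)(e_i) = ((f⊗1 − 1⊗f)∘Δ_P)(e_i) = x·e_{i−1} + (−1)^i e_{i−1}·x`,
i.e. both sides equal the element `x⊗1 + (−1)^i (1⊗x)` of `P_{i−1} = A⊗A`. Hence `ψ_f`
satisfies the homotopy lifting equation `d∘ψ_f − ψ_f∘d = (f⊗1 − 1⊗f)Δ_P` for the
degree-1 cocycle `f`.
-/

section Aux1
variable {k : Type u} [Field k]

variable {k : Type u} [Field k]

lemma pcast_rfl {P : ℤ → Type u} [∀ i, AddCommGroup (P i)] [∀ i, Module k (P i)]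
    {i : ℤ} (z : P i) : pcast (k := k) (P := P) (rfl : i = i) z = z := rfl

lemma toR_ofNat (n : ℕ) (h : (0:ℤ) ≤ n) (z : RA k) : toR k n h z = z := rfl

lemma eB_ofNat (n : ℕ) : eB k n = (1 : RA k) := rfl

lemma actL_ofNat (n : ℕ) (a : TP k) (z : RA k) :
    (actC k).actL (n : ℤ) a z = (a ⊗ₜ[k] (1 : TP k)) * z := rfl

lemma actR_ofNat (n : ℕ) (a : TP k) (z : RA k) :
    (actC k).actR (n : ℤ) (op a) z = ((1 : TP k) ⊗ₜ[k] a) * z := rfl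

lemma PC_subsingleton (i : ℤ) (h : i < 0) : Subsingleton (PC k i) := by
  obtain ⟨n, rfl⟩ : ∃ n : ℕ, i = Int.negSucc n :=
    ⟨(-i - 1).toNat, by rw [Int.negSucc_eq]; omega⟩
  exact inferInstanceAs (Subsingleton PUnit)


end Aux1

section Aux2
variable {k2dummy : Type}

variable {k : Type u} [Field k]

lemma toR_pcast {i j : ℤ} (h : i = j) (hi : 0 ≤ i) (hj : 0 ≤ j) (z : PC k i) :
    toR k j hj (pcast (k := k) (P := PC k) h z) = toR k i hi z := by subst h; rfl

lemma toR_eB (i : ℤ) (hi : 0 ≤ i) : toR k i hi (eB k i) = 1 := by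
  obtain ⟨n, rfl⟩ := Int.eq_ofNat_of_zero_le hi; rfl

lemma toR_actL (i : ℤ) (hi : 0 ≤ i) (a : TP k) (z : PC k i) :
    toR k i hi ((actC k).actL i a z) = (a ⊗ₜ[k] (1 : TP k)) * toR k i hi z := by
  obtain ⟨n, rfl⟩ := Int.eq_ofNat_of_zero_le hi; rfl

lemma toR_actR (i : ℤ) (hi : 0 ≤ i) (a : TP k) (z : PC k i) :
    toR k i hi ((actC k).actR i (op a) z) = ((1 : TP k) ⊗ₜ[k] a) * toR k i hi z := by
  obtain ⟨n, rfl⟩ := Int.eq_ofNat_of_zero_le hi; rfl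

lemma toR_dC (i : ℤ) (h1 : 1 ≤ i) (h' : 0 ≤ i - 1) (h'' : 0 ≤ i) (z : PC k i) :
    toR k (i - 1) h' (dC k i z)
      = (if Odd i then uE k else vE k) * toR k i h'' z := by
  unfold dC
  rw [dif_pos h1]
  simp only [LinearMap.comp_apply, LinearEquiv.coe_toLinearMap, LinearMap.mulLeft_apply,
    LinearEquiv.apply_symm_apply]

lemma dC_neg (i : ℤ) (h : ¬ 1 ≤ i) : dC k i = 0 := by
  unfold dC; rw [dif_neg h]

lemma toR_symm_tmul {i : ℤ} (hi : 0 ≤ i) (a b : TP k) :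
    (toR k i hi).symm (a ⊗ₜ[k] b)
      = (actC k).actL i a ((actC k).actR i (op b) (eB k i)) := by
  apply (toR k i hi).injective
  rw [LinearEquiv.apply_symm_apply, toR_actL, toR_actR, toR_eB, mul_one,
    Algebra.TensorProduct.tmul_mul_tmul, mul_one, one_mul]

lemma bimap_apply {i j : ℤ} (hi : 0 ≤ i) (hj : 0 ≤ j) {φ : PC k i →ₗ[k] PC k j}
    (hφ : IsBimap (actC k) φ) (z : PC k i) :
    toR k j hj (φ z) = toR k i hi z * toR k j hj (φ (eB k i)) := by
  have key : ∀ w : RA k,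
      toR k j hj (φ ((toR k i hi).symm w)) = w * toR k j hj (φ (eB k i)) := by
    intro w
    induction w using TensorProduct.induction_on with
    | zero => simp
    | tmul a b =>
      have h1 := LinearMap.congr_fun (hφ.1 a) ((actC k).actR i (op b) (eB k i))
      have h2 := LinearMap.congr_fun (hφ.2 (op b)) (eB k i)
      simp only [LinearMap.comp_apply] at h1 h2
      rw [toR_symm_tmul, h1, h2, toR_actL, toR_actR,
        ← mul_assoc, Algebra.TensorProduct.tmul_mul_tmul, mul_one, one_mul]
    | add x y hx hy =>
      rw [map_add, map_add, map_add, add_mul, hx, hy]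
  have := key (toR k i hi z)
  rwa [LinearEquiv.symm_apply_apply] at this

lemma bimap_ext {i j : ℤ} (hi : 0 ≤ i) (hj : 0 ≤ j) {φ φ' : PC k i →ₗ[k] PC k j}
    (hφ : IsBimap (actC k) φ) (hφ' : IsBimap (actC k) φ')
    (he : φ (eB k i) = φ' (eB k i)) : φ = φ' := by
  refine LinearMap.ext fun z => (toR k j hj).injective ?_
  rw [bimap_apply hi hj hφ, bimap_apply hi hj hφ', he]

end Aux2
section Gen
variable {k : Type u} [Field k]
variable {A : Type u} [Ring A] [Algebra k A]
variable {P : ℤ → Type u} [∀ i, AddCommGroup (P i)] [∀ i, Module k (P i)]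
variable (act : Bimod (k := k) A P)

lemma liftQOr0_mk {X Z : Type u} [AddCommGroup X] [Module k X] [AddCommGroup Z] [Module k Z]
    {S : Submodule k X} {f : X →ₗ[k] Z} (h : S ≤ LinearMap.ker f) (x : X) :
    liftQOr0 S f (Submodule.Quotient.mk x) = f x := by
  unfold liftQOr0
  rw [dif_pos h, Submodule.liftQ_apply]

lemma mapQOr0_mk {X Y : Type u} [AddCommGroup X] [Module k X] [AddCommGroup Y] [Module k Y]
    {S : Submodule k X} {T : Submodule k Y} {f : X →ₗ[k] Y} (h : S ≤ T.comap f) (x : X) :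
    mapQOr0 S T f (Submodule.Quotient.mk x) = Submodule.Quotient.mk (f x) := by
  unfold mapQOr0
  rw [dif_pos h, Submodule.mapQ_apply]

lemma actLTensA_mk (hc : act.IsCommuting) {j l : ℤ} (a : A) (x : P j) (y : P l) :
    actLTensA act j l a (tmulA act x y) = tmulA act (act.actL j a x) y := by
  refine mapQOr0_mk ?_ _
  rw [bal, Submodule.span_le]
  rintro z ⟨b, x', y', rfl⟩
  simp only [SetLike.mem_coe, Submodule.mem_comap, map_sub, TensorProduct.map_tmul,
    LinearMap.id_coe, id_eq]
  have hcomm := LinearMap.congr_fun (hc j a (op b)) x'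
  simp only [Module.End.mul_apply] at hcomm
  rw [hcomm]
  exact Submodule.subset_span ⟨b, (act.actL j a) x', y', rfl⟩

lemma actRTensA_mk (hc : act.IsCommuting) {j l : ℤ} (b : Aᵐᵒᵖ) (x : P j) (y : P l) :
    actRTensA act j l b (tmulA act x y) = tmulA act x (act.actR l b y) := by
  refine mapQOr0_mk ?_ _
  rw [bal, Submodule.span_le]
  rintro z ⟨a, x', y', rfl⟩
  simp only [SetLike.mem_coe, Submodule.mem_comap, map_sub, TensorProduct.map_tmul,
    LinearMap.id_coe, id_eq]
  have hcomm := LinearMap.congr_fun (hc l a b) y'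
  simp only [Module.End.mul_apply] at hcomm
  rw [← hcomm]
  exact Submodule.subset_span ⟨a, x', (act.actR l b) y', rfl⟩

variable {m : ℤ} {f : P m →ₗ[k] A}

lemma collapseL_mk (hf : IsBimapToAlg act f) {l : ℤ} (x : P m) (y : P l) :
    collapseL act f l (tmulA act x y) = act.actL l (f x) y := by
  have : collapseL act f l (tmulA act x y)
      = TensorProduct.lift ((act.actL l).toLinearMap ∘ₗ f) (x ⊗ₜ[k] y) := by
    refine liftQOr0_mk ?_ _
    rw [bal, Submodule.span_le]
    rintro z ⟨a, x', y', rfl⟩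
    simp only [SetLike.mem_coe, LinearMap.mem_ker, map_sub, TensorProduct.lift.tmul,
      LinearMap.comp_apply, AlgHom.toLinearMap_apply]
    rw [hf.2 a x', map_mul]
    simp [Module.End.mul_apply]
  rw [this]
  simp [TensorProduct.lift.tmul]

lemma collapseR_mk (hf : IsBimapToAlg act f) {j : ℤ} (x : P j) (y : P m) :
    collapseR act f j (tmulA act x y) = act.actR j (op (f y)) x := by
  have : collapseR act f j (tmulA act x y)
      = TensorProduct.lift (LinearMap.flip ((act.actR j).toLinearMap ∘ₗ
          (opLinearEquiv k : A ≃ₗ[k] Aᵐᵒᵖ).toLinearMap ∘ₗ f)) (x ⊗ₜ[k] y) := by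
    refine liftQOr0_mk ?_ _
    rw [bal, Submodule.span_le]
    rintro z ⟨a, x', y', rfl⟩
    simp only [SetLike.mem_coe, LinearMap.mem_ker, map_sub, TensorProduct.lift.tmul,
      LinearMap.flip_apply, LinearMap.comp_apply, AlgHom.toLinearMap_apply,
      LinearEquiv.coe_toLinearMap, MulOpposite.coe_opLinearEquiv]
    rw [hf.1 a y', op_mul, map_mul]
    simp [Module.End.mul_apply]
  rw [this]
  simp [TensorProduct.lift.tmul]

lemma tcast_tmulA {j j' l l' : ℤ} (h1 : j = j') (h2 : l = l') (x : P j) (y : P l) :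
    tcast act h1 h2 (tmulA act x y)
      = tmulA act (pcast (k := k) (P := P) h1 x) (pcast (k := k) (P := P) h2 y) := by
  subst h1; subst h2; rfl

lemma pcast_eB {i j : ℤ} (h : i = j) :
    pcast (k := k) (P := PC k) h (eB k i) = eB k j := by subst h; rfl

/-- evaluation of `fTensorOne` on a component -/
lemma fTensorOne_lof_pos {i : ℤ} (p : DiagIdx i) (h : p.1.1 = m) (z : TensA act p.1.1 p.1.2) :
    fTensorOne act f i (inclDT act p z)
      = pcast (k := k) (P := P) (show p.1.2 = i - m by have := p.2; omega)
          (collapseL act f p.1.2 (tcast act h rfl z)) := by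
  unfold fTensorOne inclDT
  rw [DirectSum.toModule_lof, dif_pos h]
  rfl

lemma fTensorOne_lof_neg {i : ℤ} (p : DiagIdx i) (h : ¬ p.1.1 = m) (z : TensA act p.1.1 p.1.2) :
    fTensorOne act f i (inclDT act p z) = 0 := by
  unfold fTensorOne inclDT
  rw [DirectSum.toModule_lof, dif_neg h]
  rfl

lemma oneTensorF_lof_pos {i : ℤ} (p : DiagIdx i) (h : p.1.2 = m) (z : TensA act p.1.1 p.1.2) :
    oneTensorF act f i (inclDT act p z)
      = ((m * p.1.1).negOnePow : ℤ) •
          pcast (k := k) (P := P) (show p.1.1 = i - m by have := p.2; omega)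
            (collapseR act f p.1.1 (tcast act rfl h z)) := by
  unfold oneTensorF inclDT
  rw [DirectSum.toModule_lof, dif_pos h]
  rfl

lemma oneTensorF_lof_neg {i : ℤ} (p : DiagIdx i) (h : ¬ p.1.2 = m) (z : TensA act p.1.1 p.1.2) :
    oneTensorF act f i (inclDT act p z) = 0 := by
  unfold oneTensorF inclDT
  rw [DirectSum.toModule_lof, dif_neg h]
  rfl

lemma actLDT_lof {i : ℤ} (a : A) (p : DiagIdx i) (z : TensA act p.1.1 p.1.2) :
    actLDT act i a (inclDT act p z) = inclDT act p (actLTensA act p.1.1 p.1.2 a z) := by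
  unfold actLDT inclDT
  exact DFinsupp.mapRange_single (hf := fun _ => map_zero _)

lemma actRDT_lof {i : ℤ} (b : Aᵐᵒᵖ) (p : DiagIdx i) (z : TensA act p.1.1 p.1.2) :
    actRDT act i b (inclDT act p z) = inclDT act p (actRTensA act p.1.1 p.1.2 b z) := by
  unfold actRDT inclDT
  exact DFinsupp.mapRange_single (hf := fun _ => map_zero _)

end Gen

section Gen2
variable {k : Type u} [Field k]
variable {A : Type u} [Ring A] [Algebra k A]
variable {P : ℤ → Type u} [∀ i, AddCommGroup (P i)] [∀ i, Module k (P i)]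
variable (act : Bimod (k := k) A P)

lemma pcast_actL {i j : ℤ} (h : i = j) (a : A) (z : P i) :
    pcast (k := k) (P := P) h (act.actL i a z) = act.actL j a (pcast (k := k) (P := P) h z) := by
  subst h; rfl

lemma pcast_actR {i j : ℤ} (h : i = j) (b : Aᵐᵒᵖ) (z : P i) :
    pcast (k := k) (P := P) h (act.actR i b z) = act.actR j b (pcast (k := k) (P := P) h z) := by
  subst h; rfl

lemma tcast_actLTensA {j j' l l' : ℤ} (h1 : j = j') (h2 : l = l') (a : A)
    (z : TensA act j l) :
    tcast act h1 h2 (actLTensA act j l a z) = actLTensA act j' l' a (tcast act h1 h2 z) := by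
  subst h1; subst h2; rfl

lemma tcast_actRTensA {j j' l l' : ℤ} (h1 : j = j') (h2 : l = l') (b : Aᵐᵒᵖ)
    (z : TensA act j l) :
    tcast act h1 h2 (actRTensA act j l b z) = actRTensA act j' l' b (tcast act h1 h2 z) := by
  subst h1; subst h2; rfl

variable {m : ℤ} {f : P m →ₗ[k] A}

lemma collapseL_actL_comp (hc : act.IsCommuting) (hf : IsBimapToAlg act f) (l : ℤ) (a : A) :
    collapseL act f l ∘ₗ actLTensA act m l a = act.actL l a ∘ₗ collapseL act f l := by
  refine Submodule.linearMap_qext _ ?_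
  refine TensorProduct.ext' fun x y => ?_
  simp only [LinearMap.comp_apply, Submodule.mkQ_apply]
  rw [show (Submodule.Quotient.mk (x ⊗ₜ[k] y) : TensA act m l) = tmulA act x y from rfl,
    actLTensA_mk act hc, collapseL_mk act hf, collapseL_mk act hf, hf.1, map_mul]
  rfl

lemma collapseL_actR_comp (hc : act.IsCommuting) (hf : IsBimapToAlg act f) (l : ℤ) (b : Aᵐᵒᵖ) :
    collapseL act f l ∘ₗ actRTensA act m l b = act.actR l b ∘ₗ collapseL act f l := by
  refine Submodule.linearMap_qext _ ?_
  refine TensorProduct.ext' fun x y => ?_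
  simp only [LinearMap.comp_apply, Submodule.mkQ_apply]
  rw [show (Submodule.Quotient.mk (x ⊗ₜ[k] y) : TensA act m l) = tmulA act x y from rfl,
    actRTensA_mk act hc, collapseL_mk act hf, collapseL_mk act hf]
  have := LinearMap.congr_fun (hc l (f x) b) y
  simp only [Module.End.mul_apply] at this
  exact this

lemma collapseR_actL_comp (hc : act.IsCommuting) (hf : IsBimapToAlg act f) (j : ℤ) (a : A) :
    collapseR act f j ∘ₗ actLTensA act j m a = act.actL j a ∘ₗ collapseR act f j := by
  refine Submodule.linearMap_qext _ ?_
  refine TensorProduct.ext' fun x y => ?_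
  simp only [LinearMap.comp_apply, Submodule.mkQ_apply]
  rw [show (Submodule.Quotient.mk (x ⊗ₜ[k] y) : TensA act j m) = tmulA act x y from rfl,
    actLTensA_mk act hc, collapseR_mk act hf, collapseR_mk act hf]
  have := LinearMap.congr_fun (hc j a (op (f y))) x
  simp only [Module.End.mul_apply] at this
  exact this.symm

lemma collapseR_actR_comp (hc : act.IsCommuting) (hf : IsBimapToAlg act f) (j : ℤ) (b : Aᵐᵒᵖ) :
    collapseR act f j ∘ₗ actRTensA act j m b = act.actR j b ∘ₗ collapseR act f j := by
  refine Submodule.linearMap_qext _ ?_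
  refine TensorProduct.ext' fun x y => ?_
  simp only [LinearMap.comp_apply, Submodule.mkQ_apply]
  rw [show (Submodule.Quotient.mk (x ⊗ₜ[k] y) : TensA act j m) = tmulA act x y from rfl,
    actRTensA_mk act hc, collapseR_mk act hf, collapseR_mk act hf]
  rw [show b = op (unop b) from rfl, hf.2 (unop b) y, op_mul, map_mul]
  rfl

lemma fTensorOne_actLDT (hc : act.IsCommuting) (hf : IsBimapToAlg act f) (i : ℤ) (a : A) :
    fTensorOne act f i ∘ₗ actLDT act i a = act.actL (i - m) a ∘ₗ fTensorOne act f i := by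
  refine DirectSum.linearMap_ext k fun p => ?_
  refine LinearMap.ext fun z => ?_
  simp only [LinearMap.comp_apply]
  rw [show DirectSum.lof k (DiagIdx i) (fun q : DiagIdx i => TensA act q.1.1 q.1.2) p
      = inclDT act p from rfl, actLDT_lof]
  by_cases h : p.1.1 = m
  · rw [fTensorOne_lof_pos act p h, fTensorOne_lof_pos act p h, tcast_actLTensA]
    have hcol := LinearMap.congr_fun (collapseL_actL_comp act hc hf p.1.2 a)
      (tcast act h rfl z)
    simp only [LinearMap.comp_apply] at hcol
    rw [hcol, pcast_actL]
  · rw [fTensorOne_lof_neg act p h, fTensorOne_lof_neg act p h, map_zero]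

lemma fTensorOne_actRDT (hc : act.IsCommuting) (hf : IsBimapToAlg act f) (i : ℤ) (b : Aᵐᵒᵖ) :
    fTensorOne act f i ∘ₗ actRDT act i b = act.actR (i - m) b ∘ₗ fTensorOne act f i := by
  refine DirectSum.linearMap_ext k fun p => ?_
  refine LinearMap.ext fun z => ?_
  simp only [LinearMap.comp_apply]
  rw [show DirectSum.lof k (DiagIdx i) (fun q : DiagIdx i => TensA act q.1.1 q.1.2) p
      = inclDT act p from rfl, actRDT_lof]
  by_cases h : p.1.1 = m
  · rw [fTensorOne_lof_pos act p h, fTensorOne_lof_pos act p h, tcast_actRTensA]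
    have hcol := LinearMap.congr_fun (collapseL_actR_comp act hc hf p.1.2 b)
      (tcast act h rfl z)
    simp only [LinearMap.comp_apply] at hcol
    rw [hcol, pcast_actR]
  · rw [fTensorOne_lof_neg act p h, fTensorOne_lof_neg act p h, map_zero]

lemma oneTensorF_actLDT (hc : act.IsCommuting) (hf : IsBimapToAlg act f) (i : ℤ) (a : A) :
    oneTensorF act f i ∘ₗ actLDT act i a = act.actL (i - m) a ∘ₗ oneTensorF act f i := by
  refine DirectSum.linearMap_ext k fun p => ?_
  refine LinearMap.ext fun z => ?_
  simp only [LinearMap.comp_apply]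
  rw [show DirectSum.lof k (DiagIdx i) (fun q : DiagIdx i => TensA act q.1.1 q.1.2) p
      = inclDT act p from rfl, actLDT_lof]
  by_cases h : p.1.2 = m
  · rw [oneTensorF_lof_pos act p h, oneTensorF_lof_pos act p h, tcast_actLTensA]
    have hcol := LinearMap.congr_fun (collapseR_actL_comp act hc hf p.1.1 a)
      (tcast act rfl h z)
    simp only [LinearMap.comp_apply] at hcol
    rw [hcol, pcast_actL, map_zsmul]
  · rw [oneTensorF_lof_neg act p h, oneTensorF_lof_neg act p h, map_zero]

lemma oneTensorF_actRDT (hc : act.IsCommuting) (hf : IsBimapToAlg act f) (i : ℤ) (b : Aᵐᵒᵖ) :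
    oneTensorF act f i ∘ₗ actRDT act i b = act.actR (i - m) b ∘ₗ oneTensorF act f i := by
  refine DirectSum.linearMap_ext k fun p => ?_
  refine LinearMap.ext fun z => ?_
  simp only [LinearMap.comp_apply]
  rw [show DirectSum.lof k (DiagIdx i) (fun q : DiagIdx i => TensA act q.1.1 q.1.2) p
      = inclDT act p from rfl, actRDT_lof]
  by_cases h : p.1.2 = m
  · rw [oneTensorF_lof_pos act p h, oneTensorF_lof_pos act p h, tcast_actRTensA]
    have hcol := LinearMap.congr_fun (collapseR_actR_comp act hc hf p.1.1 b)
      (tcast act rfl h z)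
    simp only [LinearMap.comp_apply] at hcol
    rw [hcol, pcast_actR, map_zsmul]
  · rw [oneTensorF_lof_neg act p h, oneTensorF_lof_neg act p h, map_zero]

lemma IsBimap.comp' {i j l : ℤ} {φ : P i →ₗ[k] P j} {φ' : P j →ₗ[k] P l}
    (h' : IsBimap act φ') (h : IsBimap act φ) : IsBimap act (φ' ∘ₗ φ) := by
  constructor
  · intro a
    rw [LinearMap.comp_assoc, h.1 a, ← LinearMap.comp_assoc, h'.1 a, LinearMap.comp_assoc]
  · intro b
    rw [LinearMap.comp_assoc, h.2 b, ← LinearMap.comp_assoc, h'.2 b, LinearMap.comp_assoc]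

lemma IsBimap.sub' {i j : ℤ} {φ φ' : P i →ₗ[k] P j}
    (h : IsBimap act φ) (h' : IsBimap act φ') : IsBimap act (φ - φ') := by
  constructor
  · intro a; rw [LinearMap.sub_comp, LinearMap.comp_sub, h.1 a, h'.1 a]
  · intro b; rw [LinearMap.sub_comp, LinearMap.comp_sub, h.2 b, h'.2 b]

lemma pcast_bimap {i j : ℤ} (h : i = j) : IsBimap act (pcast (k := k) (P := P) h) := by
  subst h
  exact ⟨fun a => rfl, fun b => rfl⟩

end Gen2

section Fin
variable {k : Type u} [Field k]

lemma toR_actRv (i : ℤ) (hi : 0 ≤ i) (b : (TP k)ᵐᵒᵖ) (z : PC k i) :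
    toR k i hi ((actC k).actR i b z) = ((1 : TP k) ⊗ₜ[k] unop b) * toR k i hi z :=
  toR_actR i hi (unop b) z

lemma actC_comm : (actC k).IsCommuting := by
  intro i a b
  rcases le_or_gt 0 i with hi | hi
  · refine LinearMap.ext fun z => ?_
    simp only [Module.End.mul_apply]
    apply (toR k i hi).injective
    rw [toR_actL, toR_actRv, toR_actRv, toR_actL, ← mul_assoc, ← mul_assoc, mul_comm
      ((1 : TP k) ⊗ₜ[k] unop b) (a ⊗ₜ[k] (1 : TP k))]
  · refine LinearMap.ext fun z => ?_
    exact @Subsingleton.elim _ (PC_subsingleton i hi) _ _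

lemma dC_bimap (i : ℤ) : IsBimap (actC k) (dC k i) := by
  by_cases h1 : 1 ≤ i
  · constructor
    · intro a
      refine LinearMap.ext fun z => ?_
      simp only [LinearMap.comp_apply]
      apply (toR k (i - 1) (by omega)).injective
      rw [toR_dC i h1 (by omega) (by omega), toR_actL, toR_actL,
        toR_dC i h1 (by omega) (by omega), ← mul_assoc, ← mul_assoc,
        mul_comm (if Odd i then uE k else vE k) (a ⊗ₜ[k] (1 : TP k))]
    · intro b
      refine LinearMap.ext fun z => ?_
      simp only [LinearMap.comp_apply]
      apply (toR k (i - 1) (by omega)).injective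
      rw [toR_dC i h1 (by omega) (by omega), toR_actRv, toR_actRv,
        toR_dC i h1 (by omega) (by omega), ← mul_assoc, ← mul_assoc,
        mul_comm (if Odd i then uE k else vE k) ((1 : TP k) ⊗ₜ[k] unop b)]
  · rw [dC_neg i h1]
    exact ⟨fun a => by simp only [LinearMap.zero_comp, LinearMap.comp_zero],
      fun b => by simp only [LinearMap.zero_comp, LinearMap.comp_zero]⟩

lemma negOnePow_sub_one (i : ℤ) : (((i - 1).negOnePow : ℤˣ) : ℤ) = -((i.negOnePow : ℤˣ) : ℤ) := by
  conv_rhs => rw [show i = (i - 1) + 1 by ring]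
  rw [Int.negOnePow_succ]
  simp

end Fin

theorem concrete_psi_f_homotopy_lifting (k : Type u) [Field k] [CharZero k]
    -- `Δ_P` is the diagonal map with `Δ(e_i) = Σ_{j+l=i} e_j ⊗ e_l`
    (Δ : ∀ i, PC k i →ₗ[k] DTarget (actC k) i)
    (hΔ : IsDiagonal (actC k) (dC k) (muC k) Δ)
    (hΔval : ∀ i : ℤ, 0 ≤ i → Δ i (eB k i) =
      ∑ j ∈ Finset.range (i.toNat + 1),
        inclDT (actC k) (⟨((j : ℤ), i - (j : ℤ)), by omega⟩ : DiagIdx i)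
          (tmulA (actC k) (eB k (j : ℤ)) (eB k (i - (j : ℤ)))))
    -- the cocycle `f` with `f(e_1) = x`
    (f : PC k 1 →ₗ[k] TP k) (hfbim : IsBimapToAlg (actC k) f)
    (hfc : IsCocycle (dC k) f) (hfval : f (eB k 1) = xGen k)
    -- the family `ψ` of `(A⊗A)`-linear maps with `ψ_i(e_i) = i·e_i`
    (ψ : ∀ i, PC k i →ₗ[k] PC k (i - 1 + 1)) (hψbim : ∀ i, IsBimap (actC k) (ψ i))
    (hψval : ∀ i : ℤ, 0 ≤ i →
      ψ i (eB k i) = pcast (k := k) (P := PC k) (show i = i - 1 + 1 by omega) (i • eB k i)) :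
    -- for each `i ≥ 1`, both sides of the homotopy-lifting equation evaluate on `e_i`
    -- to `x·e_{i−1} + (−1)^i e_{i−1}·x`
    (∀ i : ℤ, 1 ≤ i →
      (pcast (show i - 1 + 1 - 1 = i - 1 by omega) ∘ₗ dC k (i - 1 + 1) ∘ₗ ψ i
        - pcast (show i - 1 - 1 + 1 = i - 1 by omega) ∘ₗ ψ (i - 1) ∘ₗ dC k i) (eB k i)
      = (actC k).actL (i - 1) (xGen k) (eB k (i - 1))
        + (i.negOnePow : ℤ) • (actC k).actR (i - 1) (op (xGen k)) (eB k (i - 1)) ∧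
      (fTensorOne (actC k) f i ∘ₗ Δ i - oneTensorF (actC k) f i ∘ₗ Δ i) (eB k i)
      = (actC k).actL (i - 1) (xGen k) (eB k (i - 1))
        + (i.negOnePow : ℤ) • (actC k).actR (i - 1) (op (xGen k)) (eB k (i - 1))) ∧
    -- hence the homotopy lifting equation holds
    (∀ i : ℤ,
      pcast (show i - 1 + 1 - 1 = i - 1 by omega) ∘ₗ dC k (i - 1 + 1) ∘ₗ ψ i
        - (((1 : ℤ) - 1).negOnePow : ℤ) •
            (pcast (show i - 1 - 1 + 1 = i - 1 by omega) ∘ₗ ψ (i - 1) ∘ₗ dC k i)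
      = fTensorOne (actC k) f i ∘ₗ Δ i - oneTensorF (actC k) f i ∘ₗ Δ i) := by
  have hc : (actC k).IsCommuting := actC_comm
  have main : ∀ i : ℤ, 1 ≤ i →
      ((pcast (show i - 1 + 1 - 1 = i - 1 by omega) ∘ₗ dC k (i - 1 + 1) ∘ₗ ψ i
        - pcast (show i - 1 - 1 + 1 = i - 1 by omega) ∘ₗ ψ (i - 1) ∘ₗ dC k i) (eB k i)
      = (actC k).actL (i - 1) (xGen k) (eB k (i - 1))
        + (i.negOnePow : ℤ) • (actC k).actR (i - 1) (op (xGen k)) (eB k (i - 1)) ∧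
      (fTensorOne (actC k) f i ∘ₗ Δ i - oneTensorF (actC k) f i ∘ₗ Δ i) (eB k i)
      = (actC k).actL (i - 1) (xGen k) (eB k (i - 1))
        + (i.negOnePow : ℤ) • (actC k).actR (i - 1) (op (xGen k)) (eB k (i - 1))) := by
    intro i hi
    have hi0 : (0 : ℤ) ≤ i := by omega
    have hi1 : (0 : ℤ) ≤ i - 1 := by omega
    constructor
    · -- LHS value computation
      apply (toR k (i - 1) hi1).injective
      simp only [LinearMap.sub_apply, LinearMap.comp_apply]
      rw [map_sub, hψval i hi0,
        toR_pcast (show i - 1 + 1 - 1 = i - 1 by omega) (by omega) hi1,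
        toR_dC (i - 1 + 1) (by omega) (by omega) (by omega),
        toR_pcast (show i = i - 1 + 1 by omega) hi0 (by omega),
        map_zsmul, toR_eB i hi0,
        toR_pcast (show i - 1 - 1 + 1 = i - 1 by omega) (by omega) hi1,
        bimap_apply hi1 (by omega) (hψbim (i - 1)),
        toR_dC i hi (by omega) hi0, toR_eB i hi0, mul_one,
        hψval (i - 1) hi1,
        toR_pcast (show i - 1 = i - 1 - 1 + 1 by omega) hi1 (by omega),
        map_zsmul, toR_eB (i - 1) hi1,
        map_add, map_zsmul, toR_actL, toR_actR, toR_eB (i - 1) hi1, mul_one, mul_one]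
      simp only [show i - 1 + 1 = i from by omega]
      rcases Int.even_or_odd i with he | ho
      · rw [if_neg (by rwa [Int.not_odd_iff_even]), Int.negOnePow_even i he,
          ← mul_sub, ← sub_smul, show i - (i - 1) = 1 from by ring, one_smul, mul_one]
        simp [vE]
      · rw [if_pos ho, Int.negOnePow_odd i ho,
          ← mul_sub, ← sub_smul, show i - (i - 1) = 1 from by ring, one_smul, mul_one]
        simp [uE, sub_eq_add_neg]
    · -- RHS value computation
      have hmem1 : (1 : ℕ) ∈ Finset.range (i.toNat + 1) := Finset.mem_range.mpr (by omega)
      have hmem2 : (i.toNat - 1 : ℕ) ∈ Finset.range (i.toNat + 1) := Finset.mem_range.mpr (by omega)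
      rw [LinearMap.sub_apply, LinearMap.comp_apply, LinearMap.comp_apply,
        hΔval i hi0, map_sum, map_sum]
      rw [Finset.sum_eq_single_of_mem 1 hmem1
        (fun b _ hb => fTensorOne_lof_neg (actC k) _ (fun h => hb (by exact_mod_cast (show ((b:ℕ):ℤ) = 1 from h))) _)]
      rw [Finset.sum_eq_single_of_mem (i.toNat - 1) hmem2
        (fun b hbm hb => oneTensorF_lof_neg (actC k) _
          (fun h => by have h' := show i - ((b:ℕ):ℤ) = 1 from h; omega) _)]
      rw [fTensorOne_lof_pos (actC k) _ (show (((1:ℕ)):ℤ) = 1 by norm_num),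
        oneTensorF_lof_pos (actC k) _ (show i - ((i.toNat - 1 : ℕ):ℤ) = 1 by omega)]
      rw [tcast_tmulA, tcast_tmulA]
      simp only [pcast_rfl, pcast_eB]
      rw [collapseL_mk (actC k) hfbim, collapseR_mk (actC k) hfbim, hfval,
        show f (eB k ((1 : ℕ) : ℤ)) = xGen k from hfval, pcast_actR, pcast_eB]
      rw [show (1 * (((i.toNat - 1 : ℕ) : ℤ))) = i - 1 from by omega,
        negOnePow_sub_one i, neg_smul, sub_neg_eq_add]
      rfl
  refine ⟨main, fun i => ?_⟩
  by_cases hi : 1 ≤ i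
  · have hsc : ((((1 : ℤ) - 1)).negOnePow : ℤ) = 1 := by norm_num
    rw [hsc, one_smul]
    refine bimap_ext (by omega : (0:ℤ) ≤ i) (by omega : (0:ℤ) ≤ i - 1) ?_ ?_ ?_
    · exact IsBimap.sub' _
        (IsBimap.comp' _ (pcast_bimap _ _) (IsBimap.comp' _ (dC_bimap _) (hψbim i)))
        (IsBimap.comp' _ (pcast_bimap _ _) (IsBimap.comp' _ (hψbim (i - 1)) (dC_bimap i)))
    · constructor
      · intro a
        have e1 : (fTensorOne (actC k) f i ∘ₗ Δ i) ∘ₗ (actC k).actL i a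
            = (actC k).actL (i - 1) a ∘ₗ (fTensorOne (actC k) f i ∘ₗ Δ i) := by
          rw [LinearMap.comp_assoc, hΔ.bimapL i a, ← LinearMap.comp_assoc,
            fTensorOne_actLDT (actC k) hc hfbim i a, LinearMap.comp_assoc]
        have e2 : (oneTensorF (actC k) f i ∘ₗ Δ i) ∘ₗ (actC k).actL i a
            = (actC k).actL (i - 1) a ∘ₗ (oneTensorF (actC k) f i ∘ₗ Δ i) := by
          rw [LinearMap.comp_assoc, hΔ.bimapL i a, ← LinearMap.comp_assoc,
            oneTensorF_actLDT (actC k) hc hfbim i a, LinearMap.comp_assoc]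
        rw [LinearMap.sub_comp, LinearMap.comp_sub, e1, e2]
      · intro b
        have e1 : (fTensorOne (actC k) f i ∘ₗ Δ i) ∘ₗ (actC k).actR i b
            = (actC k).actR (i - 1) b ∘ₗ (fTensorOne (actC k) f i ∘ₗ Δ i) := by
          rw [LinearMap.comp_assoc, hΔ.bimapR i b, ← LinearMap.comp_assoc,
            fTensorOne_actRDT (actC k) hc hfbim i b, LinearMap.comp_assoc]
        have e2 : (oneTensorF (actC k) f i ∘ₗ Δ i) ∘ₗ (actC k).actR i b
            = (actC k).actR (i - 1) b ∘ₗ (oneTensorF (actC k) f i ∘ₗ Δ i) := by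
          rw [LinearMap.comp_assoc, hΔ.bimapR i b, ← LinearMap.comp_assoc,
            oneTensorF_actRDT (actC k) hc hfbim i b, LinearMap.comp_assoc]
        rw [LinearMap.sub_comp, LinearMap.comp_sub, e1, e2]
    · exact ((main i hi).1).trans ((main i hi).2).symm
  · refine LinearMap.ext fun z => ?_
    exact @Subsingleton.elim _ (PC_subsingleton (i - 1) (by omega)) _ _

end HLPaper

end
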